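/- Let K be a field, V a 2m-dimensional K-vector space with a nondegenerate alternating bilinear form ⟨,⟩, F_• an isotropic flag in V, and λ a partition with m ≥ λ_1 ≥ … ≥ λ_m ≥ 0. Then the image of the Schubert variety X_λF_• under the Lagrangian involution H ↦ H^∠ equals X_λF_• itself if and only if λ is symmetric (λ = λᵀ). Moreover, when λ is symmetric, the fixed points of the involution in X_λF_• are exactly the Lagrangian subspaces belonging to X_λF_•. -/

import Mathlib

set_option linter.unusedSectionVars false
set_option linter.unusedVariables false


/-- The orthogonal subspace `W^∠ = {v : ⟨u,v⟩ = 0 for all u ∈ W}` of a subspace `W` with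
respect to a bilinear form `ω`. -/
def angleOrtho {K V : Type*} [Field K] [AddCommGroup V] [Module K V]
    (ω : V →ₗ[K] V →ₗ[K] K) (W : Submodule K V) : Submodule K V where
  carrier := {v | ∀ u ∈ W, ω u v = 0}
  add_mem' := by
    intro a b ha hb u hu
    simp [map_add, ha u hu, hb u hu]
  zero_mem' := by
    intro u hu
    simp
  smul_mem' := by
    intro c a ha u hu
    simp [map_smul, ha u hu]

/-- Membership in the Schubert variety `X_λ F_•` of `Gr(m, V)` (`dim V = 2m`): `H` is
`m`-dimensional and `dim (H ∩ F_{m+i−λ_i}) ≥ i` for `i = 1,…,m` (here `lam i` is `λ_{i+1}`,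
0-based). -/
def InSchubert {K V : Type*} [Field K] [AddCommGroup V] [Module K V] (m : ℕ)
    (lam : Fin m → ℕ) (F : ℕ → Submodule K V) (H : Submodule K V) : Prop :=
  Module.finrank K H = m ∧
    ∀ i : Fin m, (i : ℕ) + 1 ≤ Module.finrank K ↥(H ⊓ F (m + ((i : ℕ) + 1) - lam i))

section Aux

open Module Finset

variable {K V : Type*} [Field K] [AddCommGroup V] [Module K V] [FiniteDimensional K V]
variable (ω : V →ₗ[K] V →ₗ[K] K)

lemma angleOrtho_eq (W : Submodule K V) :
    angleOrtho ω W = LinearMap.BilinForm.orthogonal ω W := by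
  ext v
  exact Iff.rfl

variable {ω}

lemma SchubAux.card_filter_val_lt (m c : ℕ) (h : c ≤ m) :
    ((Finset.univ : Finset (Fin m)).filter (fun i : Fin m => (i : ℕ) < c)).card = c := by
  rw [← Fintype.card_subtype]
  rw [Fintype.card_congr
    (⟨fun x => (⟨x.1, x.2⟩ : Fin c), fun y => ⟨⟨y.1, lt_of_lt_of_le y.2 h⟩, y.2⟩,
      fun x => rfl, fun y => rfl⟩ : {i : Fin m // (i : ℕ) < c} ≃ Fin c)]
  exact Fintype.card_fin c

lemma SchubAux.isRefl (halt : ∀ v : V, ω v v = 0) : LinearMap.IsRefl ω :=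
  LinearMap.IsAlt.isRefl halt

lemma SchubAux.nondeg (halt : ∀ v : V, ω v v = 0)
    (hnondeg : ∀ v : V, (∀ u : V, ω u v = 0) → v = 0) :
    LinearMap.BilinForm.Nondegenerate ω := ⟨fun v hv =>
  hnondeg v fun u => SchubAux.isRefl halt v u (hv u), hnondeg⟩

lemma SchubAux.finrank_ortho (halt : ∀ v : V, ω v v = 0)
    (hnondeg : ∀ v : V, (∀ u : V, ω u v = 0) → v = 0) (W : Submodule K V) :
    finrank K (angleOrtho ω W) = finrank K V - finrank K W := by
  rw [angleOrtho_eq]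
  exact LinearMap.BilinForm.finrank_orthogonal (SchubAux.nondeg halt hnondeg)
    W

lemma SchubAux.ortho_ortho (halt : ∀ v : V, ω v v = 0)
    (hnondeg : ∀ v : V, (∀ u : V, ω u v = 0) → v = 0) (W : Submodule K V) :
    angleOrtho ω (angleOrtho ω W) = W := by
  rw [angleOrtho_eq, angleOrtho_eq]
  exact LinearMap.BilinForm.orthogonal_orthogonal (SchubAux.nondeg halt hnondeg)
    (SchubAux.isRefl halt) W

lemma SchubAux.ortho_sup (W₁ W₂ : Submodule K V) :
    angleOrtho ω (W₁ ⊔ W₂) = angleOrtho ω W₁ ⊓ angleOrtho ω W₂ := by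
  apply le_antisymm
  · exact le_inf
      (by rw [angleOrtho_eq, angleOrtho_eq]
          exact LinearMap.BilinForm.orthogonal_le le_sup_left)
      (by rw [angleOrtho_eq, angleOrtho_eq]
          exact LinearMap.BilinForm.orthogonal_le le_sup_right)
  · rintro v ⟨h1, h2⟩ u hu
    rcases Submodule.mem_sup.1 hu with ⟨a, ha, b, hb, rfl⟩
    rw [map_add, LinearMap.add_apply, h1 a ha, h2 b hb, add_zero]

end Aux

section Aux2

open Module Finset

variable {K V : Type*} [Field K] [AddCommGroup V] [Module K V] [FiniteDimensional K V]
variable {ω : V →ₗ[K] V →ₗ[K] K} {m : ℕ} {F : ℕ → Submodule K V}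

lemma SchubAux.dim_identity (hm : 1 ≤ m) (hdim : Module.finrank K V = 2 * m)
    (halt : ∀ v : V, ω v v = 0)
    (hnondeg : ∀ v : V, (∀ u : V, ω u v = 0) → v = 0)
    (hmono : ∀ i j : ℕ, i ≤ j → F i ≤ F j)
    (hrank : ∀ i : ℕ, i ≤ 2 * m → Module.finrank K (F i) = i)
    (hiso : ∀ i : ℕ, 1 ≤ i → i ≤ 2 * m - 1 → F i = angleOrtho ω (F (2 * m - i)))
    (H : Submodule K V) (hH : finrank K H = m) (k : ℕ) (hk : k ≤ 2 * m) :
    finrank K ↥(angleOrtho ω H ⊓ F (2 * m - k)) + k = finrank K ↥(H ⊓ F k) + m := by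
  have hFtop : F (2 * m) = ⊤ := by
    apply Submodule.eq_top_of_finrank_eq
    rw [hrank _ le_rfl, hdim]
  have hFbot : F 0 = ⊥ := by
    rw [← Submodule.finrank_eq_zero (R := K)]
    exact hrank 0 (by omega)
  have horthoF : F (2 * m - k) = angleOrtho ω (F k) := by
    rcases Nat.eq_zero_or_pos k with rfl | hk1
    · rw [Nat.sub_zero, hFtop, hFbot, angleOrtho_eq, LinearMap.BilinForm.orthogonal_bot]
    · rcases eq_or_lt_of_le hk with rfl | hk2
      · rw [Nat.sub_self, hFbot, hFtop, angleOrtho_eq,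
          LinearMap.BilinForm.orthogonal_top_eq_bot (SchubAux.nondeg halt hnondeg)]
      · have h1 : 1 ≤ 2 * m - k := by omega
        have h2 : 2 * m - k ≤ 2 * m - 1 := by omega
        have := hiso (2 * m - k) h1 h2
        rwa [show 2 * m - (2 * m - k) = k by omega] at this
  have hsupinf := Submodule.finrank_sup_add_finrank_inf_eq H (F k)
  rw [hH, hrank k hk] at hsupinf
  have hkey : angleOrtho ω H ⊓ F (2 * m - k) = angleOrtho ω (H ⊔ F k) := by
    rw [horthoF, SchubAux.ortho_sup]
  rw [hkey, SchubAux.finrank_ortho halt hnondeg, hdim]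
  have hle : finrank K ↥(H ⊔ F k) ≤ 2 * m := by
    rw [← hdim]; exact Submodule.finrank_le _
  omega

lemma SchubAux.inSchubert_ortho_iff {lam : Fin m → ℕ}
    (hm : 1 ≤ m) (hdim : Module.finrank K V = 2 * m)
    (halt : ∀ v : V, ω v v = 0)
    (hnondeg : ∀ v : V, (∀ u : V, ω u v = 0) → v = 0)
    (hmono : ∀ i j : ℕ, i ≤ j → F i ≤ F j)
    (hrank : ∀ i : ℕ, i ≤ 2 * m → Module.finrank K (F i) = i)
    (hiso : ∀ i : ℕ, 1 ≤ i → i ≤ 2 * m - 1 → F i = angleOrtho ω (F (2 * m - i)))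
    (hlam : ∀ i, lam i ≤ m)
    (H : Submodule K V) (hH : finrank K H = m) :
    InSchubert m lam F (angleOrtho ω H) ↔
      ∀ i : Fin m, lam i ≤ finrank K ↥(H ⊓ F (m + lam i - ((i : ℕ) + 1))) := by
  have hrk : finrank K (angleOrtho ω H) = m := by
    rw [SchubAux.finrank_ortho halt hnondeg, hdim, hH]; omega
  constructor
  · rintro ⟨-, h⟩ i
    have hi := h i
    have hkle : m + lam i - ((i : ℕ) + 1) ≤ 2 * m := by have := hlam i; omega
    have hid := SchubAux.dim_identity hm hdim halt hnondeg hmono hrank hiso H hH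
      (m + lam i - ((i : ℕ) + 1)) hkle
    rw [show 2 * m - (m + lam i - ((i : ℕ) + 1)) = m + ((i : ℕ) + 1) - lam i by
      have := hlam i; have := i.2; omega] at hid
    have := hlam i; have := i.2; omega
  · intro h
    refine ⟨hrk, fun i => ?_⟩
    have hi := h i
    have hkle : m + lam i - ((i : ℕ) + 1) ≤ 2 * m := by have := hlam i; omega
    have hid := SchubAux.dim_identity hm hdim halt hnondeg hmono hrank hiso H hH
      (m + lam i - ((i : ℕ) + 1)) hkle
    rw [show 2 * m - (m + lam i - ((i : ℕ) + 1)) = m + ((i : ℕ) + 1) - lam i by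
      have := hlam i; have := i.2; omega] at hid
    have := hlam i; have := i.2; omega

end Aux2

section Aux3

open Module Finset

variable {K V : Type*} [Field K] [AddCommGroup V] [Module K V] [FiniteDimensional K V]
variable {m : ℕ} {F : ℕ → Submodule K V}

lemma SchubAux.exists_extremal (hm : 1 ≤ m) (hdim : Module.finrank K V = 2 * m)
    (hmono : ∀ i j : ℕ, i ≤ j → F i ≤ F j)
    (hrank : ∀ i : ℕ, i ≤ 2 * m → Module.finrank K (F i) = i)
    (lam : Fin m → ℕ) (hlam : ∀ i, lam i ≤ m)
    (hanti : ∀ i j : Fin m, i ≤ j → lam j ≤ lam i) :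
    ∃ H : Submodule K V, InSchubert m lam F H ∧
      ∀ k : ℕ, finrank K ↥(H ⊓ F k) =
        (Finset.univ.filter fun j : Fin m => m + ((j : ℕ) + 1) - lam j ≤ k).card := by
  classical
  obtain ⟨p, hp⟩ : ∃ p : Fin m → ℕ, ∀ i : Fin m, p i = m + ((i : ℕ) + 1) - lam i :=
    ⟨_, fun i => rfl⟩
  have hp1 : ∀ i : Fin m, (i : ℕ) + 1 ≤ p i := by
    intro i; have := hlam i; have := i.2; rw [hp i]; omega
  have hp2m : ∀ i : Fin m, p i ≤ 2 * m := by
    intro i; have := hlam i; have := i.2; rw [hp i]; omega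
  have hpmono : ∀ i j : Fin m, i < j → p i < p j := by
    intro i j hij
    have h1 : lam j ≤ lam i := hanti i j (le_of_lt hij)
    have h2 : (i : ℕ) < (j : ℕ) := hij
    have := hlam i; have := hlam j; have := i.2; have := j.2
    rw [hp i, hp j]; omega
  have hpweak : ∀ i j : Fin m, i ≤ j → p i ≤ p j := by
    intro i j hij
    rcases eq_or_lt_of_le hij with rfl | h
    · exact le_rfl
    · exact le_of_lt (hpmono i j h)
  -- choose e i ∈ F (p i) \ F (p i - 1)
  have hex : ∀ i : Fin m, ∃ x, x ∈ F (p i) ∧ x ∉ F (p i - 1) := by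
    intro i
    have hlt : F (p i - 1) < F (p i) := by
      refine lt_of_le_of_ne (hmono _ _ (by omega)) fun heq => ?_
      have h1 := hrank (p i - 1) (by have := hp2m i; omega)
      have h2 := hrank (p i) (hp2m i)
      rw [heq, h2] at h1
      have := hp1 i; omega
    obtain ⟨x, hx, hx'⟩ := SetLike.exists_of_lt hlt
    exact ⟨x, hx, hx'⟩
  choose e he he' using hex
  -- key coefficient lemma
  have key : ∀ (c : Fin m → K) (k : ℕ), (∑ i, c i • e i) ∈ F k →
      ∀ i, k < p i → c i = 0 := by
    intro c k hsum
    by_contra! hbad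
    obtain ⟨i, hki, hci⟩ := hbad
    set S := Finset.univ.filter (fun j : Fin m => c j ≠ 0 ∧ k < p j) with hS
    have hSne : S.Nonempty := ⟨i, by simp [hS, hci, hki]⟩
    set i₀ := S.max' hSne with hi₀def
    have hi₀ : c i₀ ≠ 0 ∧ k < p i₀ := by
      have := S.max'_mem hSne
      simpa [hS] using this
    have hrest : ∀ j, j ≠ i₀ → c j • e j ∈ F (p i₀ - 1) := by
      intro j hj
      by_cases h0 : c j = 0
      · simp [h0]
      · by_cases hk' : k < p j
        · have hjS : j ∈ S := by simp [hS, h0, hk']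
          have hle : j ≤ i₀ := S.le_max' j hjS
          have hlt : j < i₀ := lt_of_le_of_ne hle hj
          have hplt : p j < p i₀ := hpmono _ _ hlt
          exact Submodule.smul_mem _ _ (hmono _ _ (by omega) (he j))
        · have h3 := hi₀.2
          exact Submodule.smul_mem _ _ (hmono (p j) (p i₀ - 1) (by omega) (he j))
    have hsum' : (∑ j ∈ Finset.univ.erase i₀, c j • e j) ∈ F (p i₀ - 1) :=
      Submodule.sum_mem _ fun j hj => hrest j (Finset.ne_of_mem_erase hj)
    have h1 : c i₀ • e i₀ ∈ F (p i₀ - 1) := by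
      have heq : c i₀ • e i₀ =
          (∑ i, c i • e i) - ∑ j ∈ Finset.univ.erase i₀, c j • e j := by
        rw [← Finset.add_sum_erase _ _ (Finset.mem_univ i₀)]
        abel
      rw [heq]
      exact Submodule.sub_mem _ (hmono k _ (by have := hi₀.2; omega) hsum) hsum'
    have : e i₀ ∈ F (p i₀ - 1) := by
      have h2 := Submodule.smul_mem (F (p i₀ - 1)) (c i₀)⁻¹ h1
      rwa [inv_smul_smul₀ hi₀.1] at h2
    exact he' i₀ this
  have hind : LinearIndependent K e := by
    rw [Fintype.linearIndependent_iff]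
    intro g hg i
    exact key g 0 (by rw [hg]; exact Submodule.zero_mem _) i (by have := hp1 i; omega)
  set Hs := Submodule.span K (Set.range e) with hHs
  have hexact : ∀ k : ℕ, finrank K ↥(Hs ⊓ F k) =
      (Finset.univ.filter fun j : Fin m => p j ≤ k).card := by
    intro k
    set T : Finset (Fin m) := Finset.univ.filter fun j : Fin m => p j ≤ k with hT
    set W : Submodule K V := Submodule.span K (e '' {j | p j ≤ k}) with hW
    have le1 : W ≤ Hs := Submodule.span_mono (Set.image_subset_range _ _)
    have le2 : W ≤ F k := by
      rw [hW, Submodule.span_le]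
      rintro _ ⟨j, hj, rfl⟩
      exact hmono _ _ hj (he j)
    have ge : Hs ⊓ F k ≤ W := by
      rintro x ⟨hx1, hx2⟩
      obtain ⟨c, hc⟩ := (Submodule.mem_span_range_iff_exists_fun K).1 hx1
      have hz : ∀ i, k < p i → c i = 0 := key c k (by rwa [hc])
      have hx : x = ∑ i ∈ T, c i • e i := by
        rw [← hc]
        refine (Finset.sum_filter_of_ne fun i _ hne => ?_).symm
        by_contra hpk
        exact hne (by rw [hz i (by omega)]; exact zero_smul _ _)
      rw [hx]
      refine Submodule.sum_mem _ fun j hj => Submodule.smul_mem _ _ ?_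
      refine Submodule.subset_span ⟨j, ?_, rfl⟩
      simpa [hT] using hj
    have hWrank : finrank K W = T.card := by
      have hsub : LinearIndependent K fun j : {j : Fin m // p j ≤ k} => e j :=
        hind.comp Subtype.val Subtype.val_injective
      have hr : Set.range (fun j : {j : Fin m // p j ≤ k} => e j.val)
          = e '' {j | p j ≤ k} := by
        ext v
        simp [Set.mem_image]
      have hcard := finrank_span_eq_card hsub
      rw [hr] at hcard
      rw [hW, hcard, Fintype.card_subtype]
    refine le_antisymm ?_ ?_
    · have := Submodule.finrank_mono ge
      omega
    · have := Submodule.finrank_mono (le_inf le1 le2)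
      omega
  have hexact' : ∀ k : ℕ, finrank K ↥(Hs ⊓ F k) =
      (Finset.univ.filter fun j : Fin m => m + ((j : ℕ) + 1) - lam j ≤ k).card := by
    intro k
    rw [hexact k]
    congr 1
    exact (Finset.filter_congr fun j _ => by rw [hp j]).symm
  refine ⟨Hs, ⟨?_, fun i => ?_⟩, hexact'⟩
  · rw [hHs, finrank_span_eq_card hind, Fintype.card_fin]
  · rw [show m + ((i : ℕ) + 1) - lam i = p i from (hp i).symm]
    rw [hexact (p i)]
    have hsub : Finset.univ.filter (fun j : Fin m => j ≤ i) ⊆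
        Finset.univ.filter fun j : Fin m => p j ≤ p i := by
      intro j hj
      simp only [Finset.mem_filter, Finset.mem_univ, true_and] at hj ⊢
      exact hpweak j i hj
    have hc1 : (Finset.univ.filter fun j : Fin m => j ≤ i).card = (i : ℕ) + 1 := by
      have heq : (Finset.univ.filter fun j : Fin m => j ≤ i)
          = Finset.univ.filter fun j : Fin m => (j : ℕ) < (i : ℕ) + 1 := by
        apply Finset.filter_congr
        intro j _
        exact Iff.intro (fun h => Nat.lt_succ_of_le h) (fun h => Nat.lt_succ_iff.mp h)
      rw [heq, SchubAux.card_filter_val_lt m ((i : ℕ) + 1) i.2]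
    calc (i : ℕ) + 1 = (Finset.univ.filter fun j : Fin m => j ≤ i).card := hc1.symm
      _ ≤ _ := Finset.card_le_card hsub

end Aux3

section Aux4

open Module Finset

variable {K V : Type*} [Field K] [AddCommGroup V] [Module K V]

lemma SchubAux.mem_angleOrtho {ω : V →ₗ[K] V →ₗ[K] K} {W : Submodule K V} {v : V} :
    v ∈ angleOrtho ω W ↔ ∀ u ∈ W, ω u v = 0 := Iff.rfl

lemma SchubAux.card_filter_le {m : ℕ} (i : Fin m) :
    (Finset.univ.filter fun j : Fin m => j ≤ i).card = (i : ℕ) + 1 := by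
  have heq : (Finset.univ.filter fun j : Fin m => j ≤ i)
      = Finset.univ.filter fun j : Fin m => (j : ℕ) < (i : ℕ) + 1 := by
    apply Finset.filter_congr
    intro j _
    exact Iff.intro (fun h => Nat.lt_succ_of_le h) (fun h => Nat.lt_succ_iff.mp h)
  rw [heq, SchubAux.card_filter_val_lt m ((i : ℕ) + 1) i.2]

lemma SchubAux.sum_transpose (m : ℕ) (lam : Fin m → ℕ) (hlam : ∀ i, lam i ≤ m) :
    (∑ i : Fin m, (Finset.univ.filter fun j : Fin m => (i : ℕ) + 1 ≤ lam j).card)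
      = ∑ j : Fin m, lam j := by
  calc (∑ i : Fin m, (Finset.univ.filter fun j : Fin m => (i : ℕ) + 1 ≤ lam j).card)
      = ∑ i : Fin m, ∑ j : Fin m, if (i : ℕ) + 1 ≤ lam j then 1 else 0 :=
        Finset.sum_congr rfl fun i _ => Finset.card_filter _ _
    _ = ∑ j : Fin m, ∑ i : Fin m, if (i : ℕ) + 1 ≤ lam j then 1 else 0 := Finset.sum_comm
    _ = ∑ j : Fin m, (Finset.univ.filter fun i : Fin m => (i : ℕ) + 1 ≤ lam j).card :=
        Finset.sum_congr rfl fun j _ => (Finset.card_filter _ _).symm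
    _ = ∑ j : Fin m, lam j := by
        refine Finset.sum_congr rfl fun j _ => ?_
        rw [show (Finset.univ.filter fun i : Fin m => (i : ℕ) + 1 ≤ lam j)
            = Finset.univ.filter fun i : Fin m => (i : ℕ) < lam j from
          Finset.filter_congr fun i _ => by omega]
        exact SchubAux.card_filter_val_lt m (lam j) (hlam j)

end Aux4


/-- **Corollary.**  For an isotropic flag `F_•`, the Lagrangian involution `H ↦ H^∠` maps
`X_λ F_•` onto itself if and only if `λ` is symmetric (`λ = λᵀ`); and when `λ` is symmetric,
the fixed points of the involution in `X_λ F_•` are exactly the Lagrangian subspaces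
in `X_λ F_•`. -/
theorem schubert_stable_under_involution_iff_symmetric
    {K V : Type*} [Field K] [AddCommGroup V] [Module K V] [FiniteDimensional K V]
    (m : ℕ) (hm : 1 ≤ m) (hdim : Module.finrank K V = 2 * m)
    (ω : V →ₗ[K] V →ₗ[K] K)
    (halt : ∀ v : V, ω v v = 0)
    (hnondeg : ∀ v : V, (∀ u : V, ω u v = 0) → v = 0)
    (F : ℕ → Submodule K V)
    (hmono : ∀ i j : ℕ, i ≤ j → F i ≤ F j)
    (hrank : ∀ i : ℕ, i ≤ 2 * m → Module.finrank K (F i) = i)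
    (hiso : ∀ i : ℕ, 1 ≤ i → i ≤ 2 * m - 1 → F i = angleOrtho ω (F (2 * m - i)))
    (lam : Fin m → ℕ) (hlam : ∀ i, lam i ≤ m)
    (hanti : ∀ i j : Fin m, i ≤ j → lam j ≤ lam i) :
    ((angleOrtho ω '' {H : Submodule K V | InSchubert m lam F H}
        = {H : Submodule K V | InSchubert m lam F H}) ↔
      lam = fun i : Fin m => (Finset.univ.filter fun j : Fin m => (i : ℕ) + 1 ≤ lam j).card) ∧
    ((lam = fun i : Fin m => (Finset.univ.filter fun j : Fin m => (i : ℕ) + 1 ≤ lam j).card) →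
      {H : Submodule K V | InSchubert m lam F H ∧ angleOrtho ω H = H}
        = {H : Submodule K V | InSchubert m lam F H ∧ ∀ u ∈ H, ∀ v ∈ H, ω u v = 0}) := by
  constructor
  · constructor
    · -- stability implies symmetry
      intro h
      obtain ⟨Hs, hHs, hexact⟩ :=
        SchubAux.exists_extremal hm hdim hmono hrank lam hlam hanti
      have hHsm : Module.finrank K Hs = m := hHs.1
      have hmem : Hs ∈ angleOrtho ω '' {H : Submodule K V | InSchubert m lam F H} := by
        rw [h]; exact hHs
      obtain ⟨W, hW, hWo⟩ := hmem
      have hortho : InSchubert m lam F (angleOrtho ω Hs) := by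
        have hWeq : angleOrtho ω Hs = W := by
          rw [← hWo, SchubAux.ortho_ortho halt hnondeg]
        rw [hWeq]; exact hW
      have hD := (SchubAux.inSchubert_ortho_iff hm hdim halt hnondeg hmono hrank hiso
        hlam Hs hHsm).1 hortho
      have hpt : ∀ i : Fin m,
          lam i ≤ (Finset.univ.filter fun j : Fin m => (i : ℕ) + 1 ≤ lam j).card := by
        intro i
        rcases Nat.eq_zero_or_pos (lam i) with h0 | hpos
        · rw [h0]; exact Nat.zero_le _
        · have hcle : lam i ≤ m := hlam i
          have hDi := hD i
          rw [hexact (m + lam i - ((i : ℕ) + 1))] at hDi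
          have hexj : ∃ j ∈ (Finset.univ.filter fun j : Fin m =>
              m + ((j : ℕ) + 1) - lam j ≤ m + lam i - ((i : ℕ) + 1)),
              lam i ≤ (j : ℕ) + 1 := by
            by_contra! hno
            have hsub : (Finset.univ.filter fun j : Fin m =>
                m + ((j : ℕ) + 1) - lam j ≤ m + lam i - ((i : ℕ) + 1))
                ⊆ Finset.univ.filter fun j : Fin m => (j : ℕ) < lam i - 1 := by
              intro j hj
              simp only [Finset.mem_filter, Finset.mem_univ, true_and] at hj ⊢
              have hne := hno j (Finset.mem_filter.mpr ⟨Finset.mem_univ j, hj⟩)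
              omega
            have hle := Finset.card_le_card hsub
            rw [SchubAux.card_filter_val_lt m (lam i - 1) (by omega)] at hle
            omega
          obtain ⟨j, hjf, hjc⟩ := hexj
          simp only [Finset.mem_filter, Finset.mem_univ, true_and] at hjf
          have hi'm : lam i - 1 < m := by omega
          have hlamle : lam j ≤ lam (⟨lam i - 1, hi'm⟩ : Fin m) := by
            refine hanti _ j ?_
            rw [Fin.le_def]
            show lam i - 1 ≤ (j : ℕ)
            omega
          have hlami' : (i : ℕ) + 1 ≤ lam (⟨lam i - 1, hi'm⟩ : Fin m) := by
            have h1 := hlam (⟨lam i - 1, hi'm⟩ : Fin m)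
            have h2 := hlam j
            have h3 := j.2
            have h4 := i.2
            omega
          have hsub2 : Finset.univ.filter (fun j' : Fin m => j' ≤ (⟨lam i - 1, hi'm⟩ : Fin m))
              ⊆ Finset.univ.filter fun j' : Fin m => (i : ℕ) + 1 ≤ lam j' := by
            intro j' hj'
            simp only [Finset.mem_filter, Finset.mem_univ, true_and] at hj' ⊢
            exact le_trans hlami' (hanti j' _ hj')
          have hcard := Finset.card_le_card hsub2
          rw [SchubAux.card_filter_le (⟨lam i - 1, hi'm⟩ : Fin m)] at hcard
          have : ((⟨lam i - 1, hi'm⟩ : Fin m) : ℕ) = lam i - 1 := rfl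
          omega
      have hsum := SchubAux.sum_transpose m lam hlam
      have hall : ∀ i : Fin m,
          lam i = (Finset.univ.filter fun j : Fin m => (i : ℕ) + 1 ≤ lam j).card := by
        intro i
        refine Nat.le_antisymm (hpt i) ?_
        by_contra hlt
        push_neg at hlt
        have hstrict : (∑ j : Fin m, lam j) <
            ∑ i : Fin m, (Finset.univ.filter fun j : Fin m => (i : ℕ) + 1 ≤ lam j).card :=
          Finset.sum_lt_sum (fun j _ => hpt j) ⟨i, Finset.mem_univ i, hlt⟩
        omega
      funext i
      exact hall i
    · -- symmetry implies stability
      intro hsym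
      have stable : ∀ H : Submodule K V,
          InSchubert m lam F H → InSchubert m lam F (angleOrtho ω H) := by
        intro H hH
        have hHm : Module.finrank K H = m := hH.1
        rw [SchubAux.inSchubert_ortho_iff hm hdim halt hnondeg hmono hrank hiso hlam H hHm]
        intro i
        rcases Nat.eq_zero_or_pos (lam i) with h0 | hpos
        · rw [h0]; exact Nat.zero_le _
        · have hcle : lam i ≤ m := hlam i
          have hi'm : lam i - 1 < m := by omega
          have hC := hH.2 (⟨lam i - 1, hi'm⟩ : Fin m)
          have hval : ((⟨lam i - 1, hi'm⟩ : Fin m) : ℕ) + 1 = lam i := by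
            show lam i - 1 + 1 = lam i; omega
          have hlami' : (i : ℕ) + 1 ≤ lam (⟨lam i - 1, hi'm⟩ : Fin m) := by
            have := congrFun hsym (⟨lam i - 1, hi'm⟩ : Fin m)
            rw [this]
            have hsub : Finset.univ.filter (fun j : Fin m => j ≤ i)
                ⊆ Finset.univ.filter fun j : Fin m =>
                  ((⟨lam i - 1, hi'm⟩ : Fin m) : ℕ) + 1 ≤ lam j := by
              intro j hj
              simp only [Finset.mem_filter, Finset.mem_univ, true_and] at hj ⊢
              rw [hval]
              exact hanti j i hj
            have hcard := Finset.card_le_card hsub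
            rw [SchubAux.card_filter_le i] at hcard
            exact hcard
          rw [hval] at hC
          have hmle : m + lam i - lam (⟨lam i - 1, hi'm⟩ : Fin m)
              ≤ m + lam i - ((i : ℕ) + 1) := by
            have h1 := hlam (⟨lam i - 1, hi'm⟩ : Fin m)
            have h2 := i.2
            omega
          exact le_trans hC
            (Submodule.finrank_mono (inf_le_inf_left H (hmono _ _ hmle)))
      apply Set.Subset.antisymm
      · rintro _ ⟨H, hH, rfl⟩
        exact stable H hH
      · intro H hH
        exact ⟨angleOrtho ω H, stable H hH, SchubAux.ortho_ortho halt hnondeg H⟩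
  · -- fixed points are Lagrangians
    intro _
    ext H
    simp only [Set.mem_setOf_eq]
    constructor
    · rintro ⟨hH, hfix⟩
      refine ⟨hH, fun u hu v hv => ?_⟩
      rw [← hfix] at hv
      exact SchubAux.mem_angleOrtho.1 hv u hu
    · rintro ⟨hH, hlag⟩
      refine ⟨hH, ?_⟩
      have hle : H ≤ angleOrtho ω H := by
        intro v hv
        rw [SchubAux.mem_angleOrtho]
        intro u hu
        exact hlag u hu v hv
      have hr : Module.finrank K (angleOrtho ω H) ≤ Module.finrank K H := by
        rw [SchubAux.finrank_ortho halt hnondeg, hdim, hH.1]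
        omega
      exact (Submodule.eq_of_le_of_finrank_le hle hr).symm
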